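/- Let γ > 0, let A ∈ ℝ^{n×n}, B ∈ ℝ^{n×m}, C ∈ ℝ^{r×n}, D ∈ ℝ^{r×m}, and let P be a symmetric positive definite n×n real matrix such that M(P) = [[AᵀP + PA, PB, Cᵀ],[BᵀP, −γI, Dᵀ],[C, D, −γI]] is negative definite. Let T > 0, let w : [0, T] → ℝᵐ be continuous, and let x : [0, T] → ℝⁿ be differentiable with x(0) = 0 and x′(t) = A x(t) + B w(t) for all t ∈ [0, T]. Then ∫₀ᵀ ‖C x(t) + D w(t)‖² dt ≤ γ² · ∫₀ᵀ ‖w(t)‖² dt, where ‖·‖ denotes the Euclidean norm. -/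

import Mathlib

open Matrix

/-- A real matrix is negative definite (in the quadratic-form sense):
`yᵀ M y < 0` for all nonzero real vectors `y`. -/
def Matrix.NegDefR {ι : Type*} [Fintype ι] (M : Matrix ι ι ℝ) : Prop :=
  ∀ y : ι → ℝ, y ≠ 0 → y ⬝ᵥ M *ᵥ y < 0

/-- A real matrix is positive definite (in the quadratic-form sense):
`yᵀ M y > 0` for all nonzero real vectors `y`. -/
def Matrix.PosDefR {ι : Type*} [Fintype ι] (M : Matrix ι ι ℝ) : Prop :=
  ∀ y : ι → ℝ, y ≠ 0 → 0 < y ⬝ᵥ M *ᵥ y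

/-!
`V(x) = xᵀ P x` is a storage function. Evaluating the quadratic form of the LMI matrix at
`(x, w, z / γ)`, with `z = C x + D w`, completes the square in the last block and gives the
dissipation inequality `V̇ ≤ γ ‖w‖² - γ⁻¹ ‖z‖²` along trajectories. Integrating over `[0, T]`,
with `V(x 0) = 0` and `V(x T) ≥ 0`, yields `γ⁻¹ ∫ ‖z‖² ≤ γ ∫ ‖w‖²`.
-/

section Derivatives

variable {𝕜 ι κ : Type*} [NontriviallyNormedField 𝕜] [Fintype ι] {t : 𝕜}

theorem HasDerivAt.dotProduct {f g : 𝕜 → ι → 𝕜} {f' g' : ι → 𝕜}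
    (hf : HasDerivAt f f' t) (hg : HasDerivAt g g' t) :
    HasDerivAt (fun t => f t ⬝ᵥ g t) (f' ⬝ᵥ g t + f t ⬝ᵥ g') t := by
  simp only [_root_.dotProduct, ← Finset.sum_add_distrib]
  exact HasDerivAt.fun_sum fun i _ => (hasDerivAt_pi.1 hf i).mul (hasDerivAt_pi.1 hg i)

theorem HasDerivAt.matrix_mulVec (M : Matrix κ ι 𝕜) {f : 𝕜 → ι → 𝕜} {f' : ι → 𝕜}
    (hf : HasDerivAt f f' t) : HasDerivAt (fun t => M *ᵥ f t) (M *ᵥ f') t :=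
  hasDerivAt_pi.2 fun i => by
    simpa [mulVec] using (hasDerivAt_const t (M i)).dotProduct hf

end Derivatives

theorem Matrix.PosDefR.dotProduct_mulVec_nonneg {ι : Type*} [Fintype ι] {M : Matrix ι ι ℝ}
    (hM : M.PosDefR) (y : ι → ℝ) : 0 ≤ y ⬝ᵥ M *ᵥ y := by
  rcases eq_or_ne y 0 with rfl | hy
  · simp
  · exact (hM y hy).le

theorem Matrix.NegDefR.dotProduct_mulVec_nonpos {ι : Type*} [Fintype ι] {M : Matrix ι ι ℝ}
    (hM : M.NegDefR) (y : ι → ℝ) : y ⬝ᵥ M *ᵥ y ≤ 0 := by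
  rcases eq_or_ne y 0 with rfl | hy
  · simp
  · exact (hM y hy).le

section HInfLMI

variable {ι κ ρ : Type*} [Fintype ι] [Fintype κ] [Fintype ρ] [DecidableEq κ] [DecidableEq ρ]

def hInfLMI (γ : ℝ) (A : Matrix ι ι ℝ) (B : Matrix ι κ ℝ) (C : Matrix ρ ι ℝ)
    (D : Matrix ρ κ ℝ) (P : Matrix ι ι ℝ) : Matrix ((ι ⊕ κ) ⊕ ρ) ((ι ⊕ κ) ⊕ ρ) ℝ :=
  fromBlocks (fromBlocks (Aᵀ * P + P * A) (P * B) (Bᵀ * P) (-(γ • 1)))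
    (fromRows Cᵀ Dᵀ) (fromCols C D) (-(γ • 1))

theorem dotProduct_hInfLMI_mulVec (γ : ℝ) (A : Matrix ι ι ℝ) (B : Matrix ι κ ℝ)
    (C : Matrix ρ ι ℝ) (D : Matrix ρ κ ℝ) (P : Matrix ι ι ℝ) (u : ι → ℝ) (v : κ → ℝ)
    (s : ρ → ℝ) :
    Sum.elim (Sum.elim u v) s ⬝ᵥ hInfLMI γ A B C D P *ᵥ Sum.elim (Sum.elim u v) s =
      (A *ᵥ u + B *ᵥ v) ⬝ᵥ P *ᵥ u + u ⬝ᵥ P *ᵥ (A *ᵥ u + B *ᵥ v) - γ * (v ⬝ᵥ v)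
        + 2 * (s ⬝ᵥ (C *ᵥ u + D *ᵥ v)) - γ * (s ⬝ᵥ s) := by
  simp only [hInfLMI, fromBlocks_mulVec, fromRows_mulVec, fromCols_mulVec_sumElim,
    sumElim_dotProduct_sumElim, Sum.elim_comp_inl, Sum.elim_comp_inr, mulVec_add, add_mulVec,
    dotProduct_add, add_dotProduct, neg_mulVec, smul_mulVec, one_mulVec, dotProduct_smul,
    dotProduct_neg, smul_eq_mul, ← mulVec_mulVec, dotProduct_mulVec _ Aᵀ, dotProduct_mulVec _ Bᵀ,
    dotProduct_mulVec _ Cᵀ, dotProduct_mulVec _ Dᵀ, vecMul_transpose]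
  simp only [dotProduct_comm s]
  ring

theorem hInfLMI_dissipation {γ : ℝ} {A : Matrix ι ι ℝ} {B : Matrix ι κ ℝ} {C : Matrix ρ ι ℝ}
    {D : Matrix ρ κ ℝ} {P : Matrix ι ι ℝ} (hM : (hInfLMI γ A B C D P).NegDefR)
    (u : ι → ℝ) (v : κ → ℝ) :
    (A *ᵥ u + B *ᵥ v) ⬝ᵥ P *ᵥ u + u ⬝ᵥ P *ᵥ (A *ᵥ u + B *ᵥ v) ≤
      γ * (v ⬝ᵥ v) - γ⁻¹ * ((C *ᵥ u + D *ᵥ v) ⬝ᵥ (C *ᵥ u + D *ᵥ v)) := by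
  set z := C *ᵥ u + D *ᵥ v
  have h := hM.dotProduct_mulVec_nonpos (Sum.elim (Sum.elim u v) (γ⁻¹ • z))
  rw [dotProduct_hInfLMI_mulVec] at h
  simp only [dotProduct_smul, smul_dotProduct, smul_eq_mul] at h
  have hz : γ * (γ⁻¹ * (γ⁻¹ * (z ⬝ᵥ z))) = γ⁻¹ * (z ⬝ᵥ z) := by
    rcases eq_or_ne γ 0 with rfl | hγ
    · simp
    · field_simp
  linarith

end HInfLMI

theorem stmt_11_general (n m r : ℕ) (γ : ℝ) (hγ : 0 < γ)
    (A : Matrix (Fin n) (Fin n) ℝ) (B : Matrix (Fin n) (Fin m) ℝ)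
    (C : Matrix (Fin r) (Fin n) ℝ) (D : Matrix (Fin r) (Fin m) ℝ)
    (P : Matrix (Fin n) (Fin n) ℝ) (hPpd : P.PosDefR)
    (hM : (fromBlocks
        (fromBlocks (Aᵀ * P + P * A) (P * B) (Bᵀ * P)
          (-(γ • (1 : Matrix (Fin m) (Fin m) ℝ))))
        (fromRows Cᵀ Dᵀ)
        (fromCols C D)
        (-(γ • (1 : Matrix (Fin r) (Fin r) ℝ)))).NegDefR)
    (T : ℝ) (hT : 0 < T)
    (w : ℝ → Fin m → ℝ) (hw : ContinuousOn w (Set.Icc 0 T))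
    (x : ℝ → Fin n → ℝ) (hx0 : x 0 = 0)
    (hx : ∀ t ∈ Set.Icc (0 : ℝ) T, HasDerivAt x (A *ᵥ x t + B *ᵥ w t) t) :
    ∫ t in (0 : ℝ)..T, ((C *ᵥ x t + D *ᵥ w t) ⬝ᵥ (C *ᵥ x t + D *ᵥ w t)) ≤
      γ ^ 2 * ∫ t in (0 : ℝ)..T, (w t ⬝ᵥ w t) := by
  have hxc : ContinuousOn x (Set.Icc 0 T) := fun t ht => (hx t ht).continuousAt.continuousWithinAt
  have hstorage : x T ⬝ᵥ P *ᵥ x T - x 0 ⬝ᵥ P *ᵥ x 0 ≤ ∫ t in (0 : ℝ)..T,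
      (γ * (w t ⬝ᵥ w t) - γ⁻¹ * ((C *ᵥ x t + D *ᵥ w t) ⬝ᵥ (C *ᵥ x t + D *ᵥ w t))) :=
    intervalIntegral.sub_le_integral_of_hasDeriv_right_of_le hT.le (by fun_prop)
      (fun t ht => have hxt := hx t (Set.Ioo_subset_Icc_self ht)
        (hxt.dotProduct (hxt.matrix_mulVec P)).hasDerivWithinAt)
      (ContinuousOn.integrableOn_Icc (by fun_prop))
      (fun t _ => hInfLMI_dissipation hM (x t) (w t))
  have hint {f : ℝ → ℝ} (hf : ContinuousOn f (Set.Icc 0 T)) :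
      IntervalIntegrable f MeasureTheory.volume 0 T :=
    hf.intervalIntegrable_of_Icc hT.le
  rw [intervalIntegral.integral_sub ((hint (by fun_prop)).const_mul γ)
      ((hint (by fun_prop)).const_mul γ⁻¹), intervalIntegral.integral_const_mul,
    intervalIntegral.integral_const_mul, hx0, mulVec_zero, dotProduct_zero, sub_zero] at hstorage
  have hzw := (hPpd.dotProduct_mulVec_nonneg (x T)).trans hstorage
  rw [sub_nonneg, inv_mul_le_iff₀ hγ] at hzw
  linarith

/-- If `P` is symmetric positive definite and the H∞ analysis LMI matrix
`M(P) = [[AᵀP + PA, PB, Cᵀ],[BᵀP, −γI, Dᵀ],[C, D, −γI]]` is negative definite, then every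
trajectory of `ẋ = Ax + Bw` on `[0, T]` with continuous input `w` and `x(0) = 0` satisfies
the finite-horizon L₂-gain bound `∫₀ᵀ ‖Cx + Dw‖² dt ≤ γ² ∫₀ᵀ ‖w‖² dt` (squared Euclidean
norms written as dot products). -/
theorem stmt_11 (n m r : ℕ) (γ : ℝ) (hγ : 0 < γ)
    (A : Matrix (Fin n) (Fin n) ℝ) (B : Matrix (Fin n) (Fin m) ℝ)
    (C : Matrix (Fin r) (Fin n) ℝ) (D : Matrix (Fin r) (Fin m) ℝ)
    (P : Matrix (Fin n) (Fin n) ℝ) (hPsymm : Pᵀ = P) (hPpd : P.PosDefR)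
    (hM : (fromBlocks
        (fromBlocks (Aᵀ * P + P * A) (P * B) (Bᵀ * P)
          (-(γ • (1 : Matrix (Fin m) (Fin m) ℝ))))
        (fromRows Cᵀ Dᵀ)
        (fromCols C D)
        (-(γ • (1 : Matrix (Fin r) (Fin r) ℝ)))).NegDefR)
    (T : ℝ) (hT : 0 < T)
    (w : ℝ → Fin m → ℝ) (hw : ContinuousOn w (Set.Icc 0 T))
    (x : ℝ → Fin n → ℝ) (hx0 : x 0 = 0)
    (hx : ∀ t ∈ Set.Icc (0 : ℝ) T, HasDerivAt x (A *ᵥ x t + B *ᵥ w t) t) :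
    ∫ t in (0 : ℝ)..T, ((C *ᵥ x t + D *ᵥ w t) ⬝ᵥ (C *ᵥ x t + D *ᵥ w t)) ≤
      γ ^ 2 * ∫ t in (0 : ℝ)..T, (w t ⬝ᵥ w t) :=
  stmt_11_general n m r γ hγ A B C D P hPpd hM T hT w hw x hx0 hx
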